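/- Let G = A * B with a ∈ A of order ≥ 3 and b ∈ B nontrivial. For n ≥ 1 set g_n = v w v w² ⋯ v wⁿ v where v = ba and w = ba⁻¹. Then for every n: d_0(g_n) = 0, d_k(g_n) = 1 for 1 ≤ k ≤ n, d_k(g_n) = 0 for k > n, and d*_k(g_n) = 0 for all k ≥ 2; consequently Δ₁(g_n) ≥ n − 1. -/

import Mathlib

open Monoid Monoid.CoprodI

attribute [local instance] Classical.propDecidable

/-- The list of syllables of the reduced word representing `g`. -/
noncomputable def syllables {ι : Type*} {M : ι → Type*} [∀ i, Group (M i)]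
    (g : CoprodI M) : List (Σ i, M i) :=
  letI := Classical.decEq ι
  letI : ∀ i, DecidableEq (M i) := fun _ => Classical.decEq _
  (Word.equiv g).toList

/-- `g` is a palindrome iff its reduced word reads the same backwards. -/
noncomputable def IsPalindrome {ι : Type*} {M : ι → Type*} [∀ i, Group (M i)]
    (g : CoprodI M) : Prop :=
  (syllables g).reverse = syllables g

/-- `segCount s k g` is the number of `s`-segments of syllable length `2k+1`
in the reduced form of `g`: pairs of consecutive occurrences of the syllable `s`
at distance `2k+2` in the syllable list. -/
noncomputable def segCount {ι : Type*} {M : ι → Type*} [∀ i, Group (M i)]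
    (s : Σ i, M i) (k : ℕ) (g : CoprodI M) : ℕ :=
  ((Finset.range (syllables g).length ×ˢ Finset.range (syllables g).length).filter
    (fun pq => pq.1 < pq.2 ∧ (syllables g)[pq.1]? = some s ∧ (syllables g)[pq.2]? = some s ∧
      (∀ r ∈ Finset.Ioo pq.1 pq.2, (syllables g)[r]? ≠ some s) ∧ pq.2 - pq.1 = 2*k+2)).card

/-- The quasi-homomorphism `Δ₁`: the (finite) sum over `k` of the residue mod 2
of `t_k(g) = d_k(g) - d*_k(g)`. -/
noncomputable def Delta1 {M : Bool → Type*} [∀ b, Group (M b)]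
    (a : M true) (g : CoprodI M) : ℕ :=
  ∑ᶠ k : ℕ, if Odd ((segCount ⟨true, a⟩ k g : ℤ) - segCount ⟨true, a⁻¹⟩ k g)
    then 1 else 0

/-!
The reduced word of `g_n` is `b a (b a⁻¹) b a (b a⁻¹)² b a ⋯ (b a⁻¹)ⁿ b a`: `b` sits at the even
positions, `a` at the odd positions `i² + 3i + 1` (`i ≤ n`) and `a⁻¹` at the remaining odd ones.
Consecutive occurrences of `a` are `2i + 4` apart, so there is exactly one `a`-segment of each
length `2k + 1` with `1 ≤ k ≤ n`. Two occurrences of `a` are never two apart, so an `a⁻¹`-segment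
jumps over at most one `a` and has length at most `3`. Hence `d_k - d*_k = 1` for `2 ≤ k ≤ n`.
-/

theorem syllables_prod {ι : Type*} {M : ι → Type*} [∀ i, Group (M i)] (w : Word M) :
    syllables w.prod = w.toList := by
  classical
  unfold syllables
  exact congrArg Word.toList (Word.equiv.apply_symm_apply w)

section Segments
variable {α : Type*}

def IsSegment (L : List α) (s : α) (p q : ℕ) : Prop :=
  p < q ∧ L[p]? = some s ∧ L[q]? = some s ∧ ∀ r ∈ Finset.Ioo p q, L[r]? ≠ some s

theorem isSegment_iff_of_strictMono {L : List α} {s : α} {e : ℕ → ℕ} (he : StrictMono e)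
    (hocc : ∀ p, L[p]? = some s ↔ p < L.length ∧ p ∈ Set.range e) {p q : ℕ} :
    IsSegment L s p q ↔ ∃ j, p = e j ∧ q = e (j + 1) ∧ e (j + 1) < L.length := by
  constructor
  · rintro ⟨hpq, hp, hq, hgap⟩
    obtain ⟨-, i, rfl⟩ := (hocc p).1 hp
    obtain ⟨hqL, j, rfl⟩ := (hocc q).1 hq
    have hij : i < j := he.lt_iff_lt.1 hpq
    have hj : j = i + 1 := by
      by_contra hne
      have hlt : i + 1 < j := by omega
      exact hgap (e (i + 1)) (Finset.mem_Ioo.2 ⟨he (Nat.lt_succ_self i), he hlt⟩)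
        ((hocc _).2 ⟨(he hlt).trans hqL, i + 1, rfl⟩)
    exact ⟨i, rfl, hj ▸ rfl, hj ▸ hqL⟩
  · rintro ⟨j, rfl, rfl, hjL⟩
    have hlt : e j < e (j + 1) := he (Nat.lt_succ_self j)
    refine ⟨hlt, (hocc _).2 ⟨hlt.trans hjL, j, rfl⟩, (hocc _).2 ⟨hjL, j + 1, rfl⟩, ?_⟩
    rintro r hr hrs
    obtain ⟨-, m, rfl⟩ := (hocc r).1 hrs
    obtain ⟨h1, h2⟩ := Finset.mem_Ioo.1 hr
    have := he.lt_iff_lt.1 h1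
    have := he.lt_iff_lt.1 h2
    omega

theorem card_segments_of_strictMono {L : List α} {s : α} {e : ℕ → ℕ} (he : StrictMono e)
    (hocc : ∀ p, L[p]? = some s ↔ p < L.length ∧ p ∈ Set.range e) (d : ℕ) :
    ((Finset.range L.length ×ˢ Finset.range L.length).filter
        (fun pq => IsSegment L s pq.1 pq.2 ∧ pq.2 - pq.1 = d)).card =
      ((Finset.range L.length).filter
        (fun j => e (j + 1) < L.length ∧ e (j + 1) - e j = d)).card := by
  symm
  refine Finset.card_bij (fun j _ => (e j, e (j + 1))) ?_ ?_ ?_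
  · intro j hj
    obtain ⟨-, hjL, hd⟩ := Finset.mem_filter.1 hj
    have hlt : e j < e (j + 1) := he (Nat.lt_succ_self j)
    simp only [Finset.mem_filter, Finset.mem_product, Finset.mem_range]
    exact ⟨⟨hlt.trans hjL, hjL⟩, (isSegment_iff_of_strictMono he hocc).2 ⟨j, rfl, rfl, hjL⟩, hd⟩
  · intro i _ j _ hij
    exact he.injective (Prod.ext_iff.1 hij).1
  · rintro ⟨p, q⟩ hpq
    obtain ⟨-, hseg, hd⟩ := Finset.mem_filter.1 hpq
    obtain ⟨j, rfl, rfl, hjL⟩ := (isSegment_iff_of_strictMono he hocc).1 hseg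
    have : j < L.length := (he.le_apply.trans (he (Nat.lt_succ_self j)).le).trans_lt hjL
    exact ⟨j, Finset.mem_filter.2 ⟨Finset.mem_range.2 this, hjL, hd⟩, rfl⟩

end Segments

section SegCount
variable {ι : Type*} {M : ι → Type*} [∀ i, Group (M i)]

theorem segCount_eq_card (s : Σ i, M i) (k : ℕ) (g : CoprodI M) :
    segCount s k g =
      ((Finset.range (syllables g).length ×ˢ Finset.range (syllables g).length).filter fun pq =>
        IsSegment (syllables g) s pq.1 pq.2 ∧ pq.2 - pq.1 = 2 * k + 2).card := by
  simp only [segCount, IsSegment, and_assoc]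

theorem segCount_eq_zero_of_length_le {s : Σ i, M i} {k : ℕ} {g : CoprodI M}
    (h : (syllables g).length ≤ k) : segCount s k g = 0 := by
  refine Finset.card_eq_zero.2 (Finset.filter_eq_empty_iff.2 fun pq hpq _ => ?_)
  simp only [Finset.mem_product, Finset.mem_range] at hpq
  omega

end SegCount

theorem card_le_Delta1 {M : Bool → Type*} [∀ b, Group (M b)] (a : M true) (g : CoprodI M)
    (S : Finset ℕ)
    (hS : ∀ k ∈ S, Odd ((segCount ⟨true, a⟩ k g : ℤ) - segCount ⟨true, a⁻¹⟩ k g)) :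
    S.card ≤ Delta1 a g := by
  have hlt (k : ℕ) (hk : Odd ((segCount ⟨true, a⟩ k g : ℤ) - segCount ⟨true, a⁻¹⟩ k g)) :
      k < (syllables g).length := by
    by_contra hkL
    simp [segCount_eq_zero_of_length_le (not_lt.1 hkL)] at hk
  rw [Delta1, finsum_eq_sum_of_support_subset (s := Finset.range (syllables g).length) _
      fun k hk => Finset.mem_range.2 (hlt k (by by_contra h; simp [h] at hk)),
    ← Finset.card_filter]
  exact Finset.card_le_card fun k hk =>
    Finset.mem_filter.2 ⟨Finset.mem_range.2 (hlt k (hS k hk)), hS k hk⟩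

def posA (i : ℕ) : ℕ := i * i + 3 * i + 1

theorem posA_succ (i : ℕ) : posA (i + 1) = posA i + 2 * (i + 1) + 2 := by
  unfold posA; ring

theorem posA_strictMono : StrictMono posA :=
  strictMono_nat_of_lt_succ fun i => by rw [posA_succ]; omega

theorem odd_posA (i : ℕ) : Odd (posA i) := by
  simp [posA, parity_simps]

theorem add_two_notMem_range_posA {p : ℕ} (hp : p ∈ Set.range posA) :
    p + 2 ∉ Set.range posA := by
  rintro ⟨j, hj⟩
  obtain ⟨i, rfl⟩ := hp
  have hij : i < j := posA_strictMono.lt_iff_lt.1 (by omega)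
  have := posA_strictMono.monotone (Nat.succ_le_of_lt hij)
  rw [posA_succ] at this
  omega

theorem notMem_range_posA_of_lt_of_lt {n p : ℕ} (h₁ : posA n < p) (h₂ : p < posA (n + 1)) :
    p ∉ Set.range posA := by
  rintro ⟨j, rfl⟩
  have := posA_strictMono.lt_iff_lt.1 h₁
  have := posA_strictMono.lt_iff_lt.1 h₂
  omega

section GSeq
variable {M : Bool → Type*} [∀ b, Group (M b)] (a : M true) (b : M false)

noncomputable def gSeqLetter (p : ℕ) : Σ i, M i :=
  if Even p then ⟨false, b⟩ else if p ∈ Set.range posA then ⟨true, a⟩ else ⟨true, a⁻¹⟩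

noncomputable def gSeqList (n : ℕ) : List (Σ i, M i) :=
  (List.range (posA n + 1)).map (gSeqLetter a b)

noncomputable def gSeq (n : ℕ) : CoprodI M :=
  ((List.range n).map (fun i => (of b * of a) * (of b * of a⁻¹) ^ (i + 1))).prod * (of b * of a)

theorem gSeq_succ (n : ℕ) :
    gSeq a b (n + 1) = gSeq a b n * ((of b * of a⁻¹) ^ (n + 1) * (of b * of a)) := by
  simp only [gSeq, List.prod_range_succ, mul_assoc]

variable {a b}

theorem gSeqLetter_of_even {p : ℕ} (hp : Even p) : gSeqLetter a b p = ⟨false, b⟩ := if_pos hp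

theorem gSeqLetter_of_mem_range {p : ℕ} (hp : p ∈ Set.range posA) :
    gSeqLetter a b p = ⟨true, a⟩ := by
  obtain ⟨i, rfl⟩ := hp
  rw [gSeqLetter, if_neg (Nat.not_even_iff_odd.2 (odd_posA i)), if_pos ⟨i, rfl⟩]

theorem gSeqLetter_of_odd_of_notMem {p : ℕ} (hp : Odd p) (hp' : p ∉ Set.range posA) :
    gSeqLetter a b p = ⟨true, a⁻¹⟩ := by
  rw [gSeqLetter, if_neg (Nat.not_even_iff_odd.2 hp), if_neg hp']

theorem gSeqLetter_fst (p : ℕ) : (gSeqLetter a b p).1 = !decide (Even p) := by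
  unfold gSeqLetter; split_ifs <;> simp_all

theorem gSeqLetter_eq_a_iff (ha : a ≠ a⁻¹) {p : ℕ} :
    gSeqLetter a b p = ⟨true, a⟩ ↔ p ∈ Set.range posA := by
  refine ⟨fun h => ?_, gSeqLetter_of_mem_range⟩
  by_contra hp
  rcases Nat.even_or_odd p with he | ho
  · rw [gSeqLetter_of_even he] at h; simp at h
  · rw [gSeqLetter_of_odd_of_notMem ho hp] at h; simp [eq_comm, ha] at h

theorem gSeqLetter_eq_inv_iff (ha : a ≠ a⁻¹) {p : ℕ} :
    gSeqLetter a b p = ⟨true, a⁻¹⟩ ↔ Odd p ∧ p ∉ Set.range posA := by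
  refine ⟨fun h => ?_, fun h => gSeqLetter_of_odd_of_notMem h.1 h.2⟩
  rcases Nat.even_or_odd p with he | ho
  · rw [gSeqLetter_of_even he] at h; simp at h
  · refine ⟨ho, fun hp => ?_⟩
    rw [gSeqLetter_of_mem_range hp] at h; simp [ha] at h

theorem gSeqList_getElem?_eq_some_iff {n p : ℕ} {x : Σ i, M i} :
    (gSeqList a b n)[p]? = some x ↔ p < posA n + 1 ∧ gSeqLetter a b p = x := by
  rw [gSeqList, List.getElem?_map]
  by_cases hp : p < posA n + 1
  · simp [hp]
  · rw [List.getElem?_eq_none (by simpa using hp)]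
    simp [hp]

noncomputable def gSeqWord (ha : a ≠ 1) (hb : b ≠ 1) (n : ℕ) : Word M where
  toList := gSeqList a b n
  ne_one := by
    simp only [gSeqList, List.mem_map]
    rintro _ ⟨p, -, rfl⟩
    by_cases he : Even p
    · rwa [gSeqLetter_of_even he]
    by_cases hp : p ∈ Set.range posA
    · rwa [gSeqLetter_of_mem_range hp]
    · rw [gSeqLetter_of_odd_of_notMem (Nat.not_even_iff_odd.1 he) hp]
      simpa using ha
  chain_ne := by
    rw [gSeqList, List.isChain_map, List.isChain_range]
    intro p _
    simp [gSeqLetter_fst, Nat.even_add_one, -Nat.not_even_iff_odd]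

theorem prod_map_range_gSeqLetter_alternating {c : ℕ} (hc : Even c) (m : ℕ)
    (hm : ∀ q < 2 * m, c + q ∉ Set.range posA) :
    ((List.range (2 * m)).map fun q => of (gSeqLetter a b (c + q)).2).prod =
      (of b * of a⁻¹) ^ m := by
  induction m with
  | zero => simp
  | succ m ih =>
    have hb : gSeqLetter a b (c + 2 * m) = ⟨false, b⟩ :=
      gSeqLetter_of_even (hc.add (even_two_mul m))
    have ha : gSeqLetter a b (c + (2 * m + 1)) = ⟨true, a⁻¹⟩ :=
      gSeqLetter_of_odd_of_notMem (hc.add_odd (odd_two_mul_add_one m)) (hm _ (by omega))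
    rw [show 2 * (m + 1) = 2 * m + 1 + 1 by ring, List.prod_range_succ, List.prod_range_succ,
      ih fun q hq => hm q (by omega), hb, ha, pow_succ, mul_assoc]

theorem prod_map_range_gSeqLetter (n : ℕ) :
    ((List.range (posA n + 1)).map fun p => of (gSeqLetter a b p).2).prod = gSeq a b n := by
  induction n with
  | zero =>
    have h₀ : gSeqLetter a b 0 = ⟨false, b⟩ := gSeqLetter_of_even ⟨0, rfl⟩
    have h₁ : gSeqLetter a b 1 = ⟨true, a⟩ := gSeqLetter_of_mem_range ⟨0, rfl⟩
    rw [show posA 0 + 1 = 2 from rfl, show List.range 2 = [0, 1] from rfl]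
    simp only [gSeq, List.range_zero, List.map_cons, List.map_nil, List.prod_cons, List.prod_nil,
      mul_one, one_mul]
    rw [h₀, h₁]
  | succ n ih =>
    have hc : Even (posA n + 1) := (odd_posA n).add_one
    have hb : gSeqLetter a b (posA n + 1 + 2 * (n + 1)) = ⟨false, b⟩ :=
      gSeqLetter_of_even (hc.add (even_two_mul _))
    have ha : gSeqLetter a b (posA n + 1 + (2 * (n + 1) + 1)) = ⟨true, a⟩ :=
      gSeqLetter_of_mem_range ⟨n + 1, by rw [posA_succ]; ring⟩
    have hm : ∀ q < 2 * (n + 1), posA n + 1 + q ∉ Set.range posA := fun q hq =>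
      notMem_range_posA_of_lt_of_lt (n := n) (by omega) (by rw [posA_succ]; omega)
    rw [show posA (n + 1) + 1 = posA n + 1 + (2 * (n + 1) + 1 + 1) by rw [posA_succ]; ring,
      List.range_add, List.map_append, List.prod_append, ih, gSeq_succ, List.map_map,
      List.prod_range_succ, List.prod_range_succ]
    simp only [Function.comp_def]
    rw [prod_map_range_gSeqLetter_alternating hc (n + 1) hm, hb, ha, mul_assoc]

theorem syllables_gSeq (ha : a ≠ 1) (hb : b ≠ 1) (n : ℕ) :
    syllables (gSeq a b n) = gSeqList a b n := by
  have : gSeq a b n = (gSeqWord ha hb n).prod := by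
    simp [← prod_map_range_gSeqLetter, Word.prod, gSeqWord, gSeqList, Function.comp_def]
  rw [this, syllables_prod]
  rfl

end GSeq

section Counts
variable {M : Bool → Type*} [∀ b, Group (M b)] {a : M true} {b : M false}

theorem gSeqList_length (n : ℕ) : (gSeqList a b n).length = posA n + 1 := by
  simp [gSeqList]

theorem segCount_a_gSeq (ha : a ≠ a⁻¹) (hb : b ≠ 1) (n k : ℕ) :
    segCount ⟨true, a⟩ k (gSeq a b n) = if 1 ≤ k ∧ k ≤ n then 1 else 0 := by
  have hocc (p : ℕ) : (gSeqList a b n)[p]? = some ⟨true, a⟩ ↔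
      p < (gSeqList a b n).length ∧ p ∈ Set.range posA := by
    rw [gSeqList_getElem?_eq_some_iff, gSeqLetter_eq_a_iff ha, gSeqList_length]
  have hgap (j : ℕ) : (posA (j + 1) < posA n + 1 ∧ posA (j + 1) - posA j = 2 * k + 2) ↔
      j + 1 ≤ n ∧ j + 1 = k := by
    rw [Nat.lt_add_one_iff, posA_strictMono.le_iff_le, posA_succ]
    omega
  rw [segCount_eq_card, syllables_gSeq (fun h => ha (by simp [h])) hb,
    card_segments_of_strictMono posA_strictMono hocc, gSeqList_length]
  simp only [hgap]
  split_ifs with hk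
  · refine Finset.card_eq_one.2 ⟨k - 1, Finset.ext fun j => ?_⟩
    have : n ≤ posA n := posA_strictMono.id_le n
    simp only [Finset.mem_filter, Finset.mem_range, Finset.mem_singleton]
    omega
  · refine Finset.card_eq_zero.2 (Finset.filter_eq_empty_iff.2 fun j _ hj => hk ?_)
    omega

theorem sub_le_four_of_isSegment_inv (ha : a ≠ a⁻¹) {n p q : ℕ}
    (h : IsSegment (gSeqList a b n) ⟨true, a⁻¹⟩ p q) : q - p ≤ 4 := by
  obtain ⟨-, hp, hq, hbetween⟩ := h
  simp only [gSeqList_getElem?_eq_some_iff, gSeqLetter_eq_inv_iff ha] at hp hq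
  by_contra hfar
  have hmem (r : ℕ) (hr : Odd r) (h₁ : p < r) (h₂ : r < q) : r ∈ Set.range posA := by
    by_contra hr'
    exact hbetween r (Finset.mem_Ioo.2 ⟨h₁, h₂⟩)
      (gSeqList_getElem?_eq_some_iff.2 ⟨by omega, (gSeqLetter_eq_inv_iff ha).2 ⟨hr, hr'⟩⟩)
  have hp₂ : Odd (p + 2) := hp.2.1.add_even even_two
  exact add_two_notMem_range_posA (hmem (p + 2) hp₂ (by omega) (by omega))
    (hmem (p + 2 + 2) (hp₂.add_even even_two) (by omega) (by omega))

theorem segCount_inv_gSeq (ha : a ≠ a⁻¹) (hb : b ≠ 1) (n k : ℕ) (hk : 2 ≤ k) :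
    segCount ⟨true, a⁻¹⟩ k (gSeq a b n) = 0 := by
  rw [segCount_eq_card, syllables_gSeq (fun h => ha (by simp [h])) hb]
  refine Finset.card_eq_zero.2 (Finset.filter_eq_empty_iff.2 fun pq _ h => ?_)
  have := sub_le_four_of_isSegment_inv ha h.1
  omega

end Counts

theorem Delta1_unbounded_sequence_general {M : Bool → Type*} [∀ b, Group (M b)]
    (a : M true) (b : M false) (ha2 : a ≠ a⁻¹) (hb : b ≠ 1)
    (n : ℕ) :
    letI v : CoprodI M := CoprodI.of b * CoprodI.of a
    letI w : CoprodI M := CoprodI.of b * CoprodI.of a⁻¹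
    letI gn : CoprodI M := ((List.range n).map (fun i => v * w ^ (i + 1))).prod * v
    segCount ⟨true, a⟩ 0 gn = 0 ∧
    (∀ k : ℕ, 1 ≤ k → k ≤ n → segCount ⟨true, a⟩ k gn = 1) ∧
    (∀ k : ℕ, n < k → segCount ⟨true, a⟩ k gn = 0) ∧
    (∀ k : ℕ, 2 ≤ k → segCount ⟨true, a⁻¹⟩ k gn = 0) ∧
    n - 1 ≤ Delta1 a gn := by
  rw [← gSeq]
  have hA := segCount_a_gSeq ha2 hb n
  have hInv := segCount_inv_gSeq ha2 hb n
  refine ⟨by simp [hA], fun k h₁ h₂ => by simp [hA, h₁, h₂], fun k hk => by simp [hA]; omega,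
    hInv, ?_⟩
  calc n - 1 = (Finset.Icc 2 n).card := by simp
    _ ≤ Delta1 a (gSeq a b n) := card_le_Delta1 a (gSeq a b n) _ fun k hk => by
      obtain ⟨h₂, hkn⟩ := Finset.mem_Icc.1 hk
      rw [hA, if_pos ⟨by omega, hkn⟩, hInv k h₂]
      norm_num

/-- For `g_n = v w v w² ⋯ v wⁿ v` with `v = ba`, `w = ba⁻¹`:
`d_0(g_n) = 0`, `d_k(g_n) = 1` for `1 ≤ k ≤ n`, `d_k(g_n) = 0` for `k > n`,
`d*_k(g_n) = 0` for `k ≥ 2`; consequently `Δ₁(g_n) ≥ n - 1`. -/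
theorem Delta1_unbounded_sequence {M : Bool → Type*} [∀ b, Group (M b)]
    (a : M true) (b : M false) (ha1 : a ≠ 1) (ha2 : a ≠ a⁻¹) (hb : b ≠ 1)
    (n : ℕ) (hn : 1 ≤ n) :
    letI v : CoprodI M := CoprodI.of b * CoprodI.of a
    letI w : CoprodI M := CoprodI.of b * CoprodI.of a⁻¹
    letI gn : CoprodI M := ((List.range n).map (fun i => v * w ^ (i + 1))).prod * v
    segCount ⟨true, a⟩ 0 gn = 0 ∧
    (∀ k : ℕ, 1 ≤ k → k ≤ n → segCount ⟨true, a⟩ k gn = 1) ∧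
    (∀ k : ℕ, n < k → segCount ⟨true, a⟩ k gn = 0) ∧
    (∀ k : ℕ, 2 ≤ k → segCount ⟨true, a⁻¹⟩ k gn = 0) ∧
    n - 1 ≤ Delta1 a gn :=
  Delta1_unbounded_sequence_general a b ha2 hb n
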